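/- Existence of a close junta process matrix (Fact 1, second part, in process-matrix form): with χ and Inf as in the context, there exists a matrix χ'' : Matrix (α × β) (α × β) ℂ that is positive semidefinite, has trace χ'' = 1, satisfies χ'' (a,z) (b,w) = 0 whenever z ≠ 0 or w ≠ 0 (i.e. χ'' is the process matrix of a T-junta process), and satisfies (1/√2)·‖χ − χ''‖ ≤ √Inf + (√2/2)·Inf. -/

import Mathlib

/-!
Compress `χ` to the block of Pauli strings that act trivially on the complement, `P χ P`, and move
the trace `Inf` lost in doing so onto the all-identity string; the result is a junta process matrix.
Positive semidefiniteness gives `‖χ p q‖² ≤ χ p p · χ q q`, so the entries removed by the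
compression (those with `p` or `q` outside the block) have total squared modulus at most
`2 · Inf · tr χ = 2 · Inf`, while the added diagonal term has norm `Inf`.
-/

open Finset ComplexOrder

/-- Frobenius norm of a complex matrix. -/
noncomputable def frobNorm {ι κ : Type*} [Fintype ι] [Fintype κ]
    (M : Matrix ι κ ℂ) : ℝ :=
  Real.sqrt (∑ x, ∑ y, ‖M x y‖ ^ 2)

/-- Influence of a process matrix `χ` (indexed by Pauli strings on `T` and on `T^c`)
on the complement `T^c`: the diagonal weight of strings acting non-trivially on `T^c`. -/
noncomputable def inflCompl (k m : ℕ)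
    (χ : Matrix ((Fin k → Fin 4) × (Fin m → Fin 4)) ((Fin k → Fin 4) × (Fin m → Fin 4)) ℂ) : ℝ :=
  ∑ p ∈ Finset.univ.filter
      (fun p : (Fin k → Fin 4) × (Fin m → Fin 4) => p.2 ≠ 0), (χ p p).re

open Matrix

section frobNorm

variable {ι κ : Type*} [Fintype ι] [Fintype κ]

attribute [local instance] Matrix.frobeniusSeminormedAddCommGroup in
theorem frobNorm_eq_norm (M : Matrix ι κ ℂ) : frobNorm M = ‖M‖ := by
  simp only [frobNorm, frobenius_norm_def, Real.sqrt_eq_rpow, Real.rpow_two]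

attribute [local instance] Matrix.frobeniusSeminormedAddCommGroup in
theorem frobNorm_sub_add_le (A B C : Matrix ι κ ℂ) :
    frobNorm (A - (B + C)) ≤ frobNorm (A - B) + frobNorm C := by
  simpa only [frobNorm_eq_norm, sub_add_eq_sub_sub] using norm_sub_le (A - B) C

theorem frobNorm_sq (M : Matrix ι κ ℂ) : frobNorm M ^ 2 = ∑ x, ∑ y, ‖M x y‖ ^ 2 :=
  Real.sq_sqrt (by positivity)

theorem frobNorm_diagonal_single [DecidableEq ι] (i : ι) (c : ℂ) :
    frobNorm (diagonal (Pi.single i c)) = ‖c‖ := by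
  simp [frobNorm, diagonal_apply, Pi.single_apply, apply_ite]

end frobNorm

namespace Matrix

variable {n R : Type*}

theorem PosSemidef.re_apply_self_nonneg {M : Matrix n n ℂ} (hM : M.PosSemidef) (i : n) :
    0 ≤ (M i i).re :=
  (Complex.nonneg_iff.mp hM.diag_nonneg).1

variable [Fintype n] [DecidableEq n]

def compress [Semiring R] (p : n → Prop) [DecidablePred p] (M : Matrix n n R) : Matrix n n R :=
  diagonal (fun i => if p i then 1 else 0) * M * diagonal (fun i => if p i then 1 else 0)

variable (p : n → Prop) [DecidablePred p]

theorem compress_apply [Semiring R] (M : Matrix n n R) (i j : n) :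
    M.compress p i j = if p i ∧ p j then M i j else 0 := by
  by_cases hi : p i <;> by_cases hj : p j <;> simp [compress, hi, hj]

theorem trace_compress [Semiring R] (M : Matrix n n R) :
    (M.compress p).trace = ∑ i with p i, M i i := by
  simp [trace, compress_apply, sum_filter]

theorem PosSemidef.compress [Ring R] [PartialOrder R] [StarRing R] {M : Matrix n n R}
    (hM : M.PosSemidef) : (M.compress p).PosSemidef := by
  have h := hM.conjTranspose_mul_mul_same (diagonal fun i => if p i then (1 : R) else 0)
  rwa [diagonal_conjTranspose, show (star fun i => if p i then (1 : R) else 0) =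
    fun i => if p i then 1 else 0 from funext fun i => by by_cases hi : p i <;> simp [hi]] at h

theorem PosSemidef.norm_apply_sq_le {M : Matrix n n ℂ} (hM : M.PosSemidef) (i j : n) :
    ‖M i j‖ ^ 2 ≤ (M i i).re * (M j j).re := by
  obtain ⟨B, rfl⟩ : ∃ B : Matrix n n ℂ, M = Bᴴ * B := by
    open scoped MatrixOrder in
    exact CStarAlgebra.nonneg_iff_eq_star_mul_self.mp hM.nonneg
  have hdiag : ∀ x, ((Bᴴ * B) x x).re = ∑ l, ‖B l x‖ ^ 2 := fun x => by
    simp only [mul_apply, conjTranspose_apply, Complex.re_sum, RCLike.star_def,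
      RCLike.conj_mul]
    norm_cast
  have hentry : ‖(Bᴴ * B) i j‖ ≤ ∑ l, ‖B l i‖ * ‖B l j‖ := by
    simpa only [mul_apply, conjTranspose_apply, norm_mul, norm_star] using
      norm_sum_le univ fun l => star (B l i) * B l j
  rw [hdiag, hdiag]
  calc ‖(Bᴴ * B) i j‖ ^ 2 ≤ (∑ l, ‖B l i‖ * ‖B l j‖) ^ 2 :=
        pow_le_pow_left₀ (norm_nonneg _) hentry 2
    _ ≤ (∑ l, ‖B l i‖ ^ 2) * (∑ l, ‖B l j‖ ^ 2) := sum_mul_sq_le_sq_mul_sq _ _ _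

theorem PosSemidef.frobNorm_sub_compress_sq_le {M : Matrix n n ℂ} (hM : M.PosSemidef) :
    frobNorm (M - M.compress p) ^ 2 ≤ 2 * (∑ i with ¬p i, (M i i).re) * M.trace.re := by
  set d : n → ℝ := fun i => (M i i).re
  set w : n → ℝ := fun i => if p i then 0 else 1
  have hentry : ∀ i j, ‖(M - M.compress p) i j‖ ^ 2 ≤ (w i + w j) * (d i * d j) := by
    intro i j
    by_cases hi : p i <;> by_cases hj : p j
    · simp [compress_apply, w, hi, hj]
    all_goals
      have hw : 1 ≤ w i + w j := by simp [w, hi, hj]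
      rw [sub_apply, compress_apply, if_neg (by tauto), sub_zero]
      exact (hM.norm_apply_sq_le i j).trans (le_mul_of_one_le_left
        (mul_nonneg (hM.re_apply_self_nonneg i) (hM.re_apply_self_nonneg j)) hw)
  have hw : ∑ i with ¬p i, d i = ∑ i, w i * d i := by
    simp [sum_filter, w, ite_not]
  have htr : M.trace.re = ∑ i, d i := by simp [trace, Complex.re_sum, d]
  rw [frobNorm_sq, hw, htr]
  calc ∑ i, ∑ j, ‖(M - M.compress p) i j‖ ^ 2
      ≤ ∑ i, ∑ j, (w i + w j) * (d i * d j) := by gcongr with i _ j _; exact hentry i j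
    _ = (∑ i, w i * d i) * (∑ j, d j) + (∑ i, d i) * (∑ j, w j * d j) := by
      rw [sum_mul_sum, sum_mul_sum, ← sum_add_distrib]
      refine sum_congr rfl fun i _ => ?_
      rw [← sum_add_distrib]
      exact sum_congr rfl fun j _ => by ring
    _ = 2 * (∑ i, w i * d i) * ∑ i, d i := by ring

end Matrix

theorem exists_close_junta (k m : ℕ)
    (χ : Matrix ((Fin k → Fin 4) × (Fin m → Fin 4)) ((Fin k → Fin 4) × (Fin m → Fin 4)) ℂ)
    (hpsd : χ.PosSemidef) (htr : χ.trace = 1) :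
    ∃ χ'' : Matrix ((Fin k → Fin 4) × (Fin m → Fin 4)) ((Fin k → Fin 4) × (Fin m → Fin 4)) ℂ,
      χ''.PosSemidef ∧ χ''.trace = 1 ∧
      (∀ a b : Fin k → Fin 4, ∀ z w : Fin m → Fin 4, (z ≠ 0 ∨ w ≠ 0) → χ'' (a, z) (b, w) = 0) ∧
      (1 / Real.sqrt 2) * frobNorm (χ - χ'')
        ≤ Real.sqrt (inflCompl k m χ) + (Real.sqrt 2 / 2) * inflCompl k m χ := by
  set I := inflCompl k m χ
  have hI : 0 ≤ I := sum_nonneg fun x _ => hpsd.re_apply_self_nonneg x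
  have hI_cast : ∑ x with ¬x.2 = 0, χ x x = (I : ℂ) := by
    simp only [I, inflCompl, Complex.ofReal_sum]
    exact sum_congr rfl fun x _ => (hpsd.isHermitian.coe_re_apply_self x).symm
  refine ⟨χ.compress (·.2 = 0) + diagonal (Pi.single 0 (I : ℂ)), ?_, ?_, ?_, ?_⟩
  · exact (hpsd.compress _).add
      (PosSemidef.diagonal (Pi.single_nonneg.mpr (Complex.zero_le_real.mpr hI)))
  · rw [trace_add, trace_compress, trace_diagonal, sum_pi_single', if_pos (mem_univ _),
      ← hI_cast, sum_filter_add_sum_filter_not, ← htr, trace]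
    rfl
  · intro a b z w hzw
    simp only [Matrix.add_apply, compress_apply, diagonal_apply, Pi.single_apply, Prod.ext_iff,
      Prod.snd_zero]
    grind
  · have hclose : frobNorm (χ - χ.compress (·.2 = 0)) ≤ √(2 * I) := by
      refine Real.le_sqrt_of_sq_le ((hpsd.frobNorm_sub_compress_sq_le _).trans_eq ?_)
      simp [htr, I, inflCompl]
    calc 1 / √2 * frobNorm (χ - (χ.compress (·.2 = 0) + diagonal (Pi.single 0 (I : ℂ))))
        ≤ 1 / √2 * (√(2 * I) + I) := by
          gcongr
          refine (frobNorm_sub_add_le _ _ _).trans (add_le_add hclose ?_)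
          rw [frobNorm_diagonal_single, Complex.norm_real, Real.norm_of_nonneg hI]
      _ = √I + √2 / 2 * I := by
          rw [Real.sqrt_mul zero_le_two]
          field_simp
          linear_combination (-I) * Real.mul_self_sqrt zero_le_two
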